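/- arXiv:1709.09889 — 2 statements merged into one kernel-verified Lean document; each statement's English description precedes it below -/
import Mathlib

section
/- Let G be a finite interval graph, i.e., a finite simple graph whose vertices v can be assigned closed real intervals [a_v, b_v] (with a_v ≤ b_v) such that two distinct vertices u, v are adjacent if and only if [a_u, b_u] ∩ [a_v, b_v] ≠ ∅. Then for every weight function w : V(G) → ℕ, γ^i_w(G) = γ_w(G); that is, the weighted independent domination number equals the weighted domination number. -/
open Finset

variable {V : Type*}

/-- The closed neighborhood of a vertex `v`: `{v}` together with its neighbors. -/
def closedNbr [Fintype V] [DecidableEq V] (G : SimpleGraph V) [DecidableRel G.Adj]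
    (v : V) : Finset V :=
  insert v (G.neighborFinset v)

/-- `f` `w`-dominates the set `U`: for every `u ∈ U`, the `f`-sum over the closed
neighborhood of `u` is at least `w u`. -/
def WDominates [Fintype V] [DecidableEq V] (G : SimpleGraph V) [DecidableRel G.Adj]
    (w : V → ℕ) (f : V → ℕ) (U : Set V) : Prop :=
  ∀ u ∈ U, w u ≤ ∑ x ∈ closedNbr G u, f x

/-- The weighted domination number `γ_w(G)`: the minimum size of a `w`-dominating function. -/
noncomputable def gammaW [Fintype V] [DecidableEq V] (G : SimpleGraph V)
    [DecidableRel G.Adj] (w : V → ℕ) : ℕ :=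
  sInf {n | ∃ f : V → ℕ, WDominates G w f Set.univ ∧ ∑ v, f v = n}

/-- The weighted independent domination number `γ^i_w(G)`: the maximum, over all
independent sets `I`, of the minimum size of a function `w`-dominating `I`. -/
noncomputable def gammaIW [Fintype V] [DecidableEq V] (G : SimpleGraph V)
    [DecidableRel G.Adj] (w : V → ℕ) : ℕ :=
  sSup {m | ∃ I : Set V,
    (∀ u ∈ I, ∀ v ∈ I, u ≠ v → ¬ G.Adj u v) ∧
    m = sInf {n | ∃ f : V → ℕ, WDominates G w f I ∧ ∑ v, f v = n}}

/-- A set is dispersed if every two distinct vertices in it are at distance at least 3: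
they are non-adjacent and have no common neighbor. -/
def Dispersed (G : SimpleGraph V) (D : Set V) : Prop :=
  ∀ u ∈ D, ∀ v ∈ D, u ≠ v → ¬ G.Adj u v ∧ ∀ x, ¬(G.Adj u x ∧ G.Adj x v)

/-- `ρ_w(G)`: the maximum total weight of a dispersed set. -/
noncomputable def rhoW [Fintype V] (G : SimpleGraph V) (w : V → ℕ) : ℕ :=
  sSup {m | ∃ D : Finset V, Dispersed G ↑D ∧ ∑ v ∈ D, w v = m}

section Aux

variable [Fintype V] [DecidableEq V] (G : SimpleGraph V) [DecidableRel G.Adj]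

lemma mem_closedNbr_self (v : V) : v ∈ closedNbr G v := Finset.mem_insert_self _ _

lemma adj_mem_closedNbr {u v : V} (h : G.Adj u v) : v ∈ closedNbr G u :=
  Finset.mem_insert_of_mem (by simpa using h)

lemma mem_closedNbr_iff {a b : V → ℝ} (hab : ∀ v, a v ≤ b v)
    (hadj : ∀ u v : V, u ≠ v →
      (G.Adj u v ↔ (Set.Icc (a u) (b u) ∩ Set.Icc (a v) (b v)).Nonempty))
    {u v : V} : v ∈ closedNbr G u ↔ a v ≤ b u ∧ a u ≤ b v := by
  rcases eq_or_ne v u with rfl | hne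
  · simp [mem_closedNbr_self, hab v]
  · constructor
    · intro h
      rcases Finset.mem_insert.mp h with h' | h'
      · exact absurd h' hne
      · obtain ⟨t, ht1, ht2⟩ := (hadj u v hne.symm).mp
          (by simpa [SimpleGraph.mem_neighborFinset] using h')
        exact ⟨le_trans ht2.1 ht1.2, le_trans ht1.1 ht2.2⟩
    · rintro ⟨h1, h2⟩
      apply adj_mem_closedNbr
      refine (hadj u v hne.symm).mpr ?_
      exact ⟨max (a u) (a v), ⟨le_max_left _ _, max_le (hab u) h1⟩,
        ⟨le_max_right _ _, max_le h2 (hab v)⟩⟩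

/-- Key primal-dual lemma: in an interval graph there is a `w`-dominating function
whose total size is at most the `w`-weight of some dispersed set. -/
lemma exists_dominating_dispersed (a b : V → ℝ) (hab : ∀ v, a v ≤ b v)
    (hadj : ∀ u v : V, u ≠ v →
      (G.Adj u v ↔ (Set.Icc (a u) (b u) ∩ Set.Icc (a v) (b v)).Nonempty)) :
    ∀ n (w : V → ℕ), ∑ v, w v = n →
      ∃ (f : V → ℕ) (D : Finset V), WDominates G w f Set.univ ∧ Dispersed G ↑D ∧
        ∑ v, f v ≤ ∑ v ∈ D, w v := by
  intro n
  induction n using Nat.strong_induction_on with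
  | _ n ih =>
    intro w hw
    by_cases hzero : ∀ v, w v = 0
    · refine ⟨0, ∅, fun u _ => by simp [hzero u], by simp [Dispersed], by simp⟩
    · push_neg at hzero
      obtain ⟨v0, hv0⟩ := hzero
      set P : Finset V := Finset.univ.filter (fun v => 0 < w v) with hP
      have hPne : P.Nonempty := ⟨v0, by simp [hP, Nat.pos_of_ne_zero hv0]⟩
      obtain ⟨u, huP, humin⟩ := P.exists_min_image b hPne
      have hwu : 0 < w u := by simpa [hP] using huP
      obtain ⟨x, hxS, hxmax⟩ := (closedNbr G u).exists_max_image b ⟨u, mem_closedNbr_self G u⟩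
      set w' : V → ℕ := fun v => w v - (if x ∈ closedNbr G v then w u else 0) with hw'
      have hw'le : ∀ v, w' v ≤ w v := fun v => Nat.sub_le _ _
      have hw'u : w' u = 0 := by simp [hw', hxS]
      have hsum' : ∑ v, w' v < n := by
        rw [← hw]
        exact Finset.sum_lt_sum (fun i _ => hw'le i) ⟨u, Finset.mem_univ u, by omega⟩
      obtain ⟨f', D', hdom', hdisp', hle'⟩ := ih _ hsum' w' rfl
      set D'' := D'.filter (fun d => 0 < w' d) with hD''
      have hD''sub : D'' ⊆ D' := Finset.filter_subset _ _
      have hdisp'' : Dispersed G ↑D'' := fun p hp q hq hpq =>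
        hdisp' p (hD''sub hp) q (hD''sub hq) hpq
      have hsumD'' : ∑ v ∈ D'', w' v = ∑ v ∈ D', w' v := by
        apply Finset.sum_filter_of_ne
        intro v _ hv
        exact Nat.pos_of_ne_zero hv
      set f : V → ℕ := fun v => f' v + (if v = x then w u else 0) with hf
      have hfdom : WDominates G w f Set.univ := by
        intro v _
        have h1 : ∑ y ∈ closedNbr G v, f y
            = (∑ y ∈ closedNbr G v, f' y) + (if x ∈ closedNbr G v then w u else 0) := by
          rw [hf]
          rw [Finset.sum_add_distrib, Finset.sum_ite_eq' (closedNbr G v) x (fun _ => w u)]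
        have h2 := hdom' v (Set.mem_univ v)
        rw [h1]
        by_cases hx : x ∈ closedNbr G v
        · rw [if_pos hx]
          have h3 : w' v = w v - w u := by rw [hw']; simp [hx]
          omega
        · rw [if_neg hx]
          have h3 : w' v = w v := by rw [hw']; simp [hx]
          omega
      have hfsum : ∑ v, f v = (∑ v, f' v) + w u := by
        rw [hf, Finset.sum_add_distrib,
          Finset.sum_ite_eq' Finset.univ x (fun _ => w u)]
        simp
      have key : ∀ d, 0 < w d →
          (∃ y, y ∈ closedNbr G u ∧ y ∈ closedNbr G d) → x ∈ closedNbr G d := by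
        rintro d hd ⟨y, hyu, hyd⟩
        have hbu : b u ≤ b d := humin d (by simp [hP, hd])
        have hby : b y ≤ b x := hxmax y hyu
        rw [mem_closedNbr_iff G hab hadj] at hyd ⊢
        exact ⟨le_trans ((mem_closedNbr_iff G hab hadj).mp hxS).1 hbu, hyd.2.trans hby⟩
      by_cases hcase : ∃ d ∈ D'', x ∈ closedNbr G d
      · obtain ⟨d, hdD, hxd⟩ := hcase
        refine ⟨f, D'', hfdom, hdisp'', ?_⟩
        have hwd : 0 < w' d := (Finset.mem_filter.mp hdD).2
        have hdec : w d = w' d + w u := by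
          have h3 : w' d = w d - w u := by rw [hw']; simp [hxd]
          omega
        have hstep : ∑ v ∈ D'', w' v + w u ≤ ∑ v ∈ D'', w v := by
          rw [← Finset.add_sum_erase _ w' hdD, ← Finset.add_sum_erase _ w hdD]
          have h4 : ∑ v ∈ D''.erase d, w' v ≤ ∑ v ∈ D''.erase d, w v :=
            Finset.sum_le_sum (fun i _ => hw'le i)
          omega
        rw [hsumD''] at hstep
        omega
      · push_neg at hcase
        have huD : u ∉ D'' := fun h => hcase u h hxS
        have far : ∀ d ∈ D'', d ≠ u →
            ¬ G.Adj u d ∧ ∀ y, ¬(G.Adj u y ∧ G.Adj y d) := by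
          intro d hd _
          have hwd' : 0 < w' d := (Finset.mem_filter.mp hd).2
          have hwd : 0 < w d := lt_of_lt_of_le hwd' (hw'le d)
          constructor
          · intro hadj'
            exact hcase d hd
              (key d hwd ⟨d, adj_mem_closedNbr G hadj', mem_closedNbr_self G d⟩)
          · rintro y ⟨h1, h2⟩
            exact hcase d hd
              (key d hwd ⟨y, adj_mem_closedNbr G h1, adj_mem_closedNbr G h2.symm⟩)
        refine ⟨f, insert u D'', hfdom, ?_, ?_⟩
        · intro p hp q hq hpq
          have hmem : ∀ z, z ∈ (↑(insert u D'') : Set V) → z = u ∨ z ∈ D'' := by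
            intro z hz
            simpa [Finset.mem_insert] using hz
          rcases hmem p hp with rfl | hpD
          · rcases hmem q hq with rfl | hqD
            · exact absurd rfl hpq
            · exact far q hqD (Ne.symm hpq)
          · rcases hmem q hq with rfl | hqD
            · have hfq := far p hpD hpq
              exact ⟨fun h => hfq.1 h.symm, fun y hy => hfq.2 y ⟨hy.2.symm, hy.1.symm⟩⟩
            · exact hdisp'' p (Finset.mem_coe.mpr hpD) q (Finset.mem_coe.mpr hqD) hpq
        · rw [Finset.sum_insert huD]
          have h4 : ∑ v ∈ D'', w' v ≤ ∑ v ∈ D'', w v :=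
            Finset.sum_le_sum (fun i _ => hw'le i)
          rw [hsumD''] at h4
          omega

end Aux

/-- In finite interval graphs, `γ^i_w(G) = γ_w(G)` for every weight function `w`. -/
theorem interval_gammaI_eq_gamma [Fintype V] [DecidableEq V] (G : SimpleGraph V)
    [DecidableRel G.Adj]
    (a b : V → ℝ) (hab : ∀ v, a v ≤ b v)
    (hadj : ∀ u v : V, u ≠ v →
      (G.Adj u v ↔ (Set.Icc (a u) (b u) ∩ Set.Icc (a v) (b v)).Nonempty))
    (w : V → ℕ) :
    gammaIW G w = gammaW G w := by
  have hwdom : WDominates G w w Set.univ := by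
    intro u _
    exact Finset.single_le_sum (f := w) (fun i _ => Nat.zero_le _) (mem_closedNbr_self G u)
  have hgmem : gammaW G w ∈
      {n | ∃ f : V → ℕ, WDominates G w f Set.univ ∧ ∑ v, f v = n} :=
    Nat.sInf_mem ⟨_, w, hwdom, rfl⟩
  obtain ⟨f₀, hf₀dom, hf₀sum⟩ := hgmem
  have hub : ∀ m ∈ {m | ∃ I : Set V,
      (∀ u ∈ I, ∀ v ∈ I, u ≠ v → ¬ G.Adj u v) ∧
      m = sInf {n | ∃ f : V → ℕ, WDominates G w f I ∧ ∑ v, f v = n}},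
      m ≤ gammaW G w := by
    rintro m ⟨I, hI, rfl⟩
    exact Nat.sInf_le ⟨f₀, fun u _ => hf₀dom u (Set.mem_univ u), hf₀sum⟩
  have hBdd : BddAbove {m | ∃ I : Set V,
      (∀ u ∈ I, ∀ v ∈ I, u ≠ v → ¬ G.Adj u v) ∧
      m = sInf {n | ∃ f : V → ℕ, WDominates G w f I ∧ ∑ v, f v = n}} :=
    ⟨gammaW G w, hub⟩
  apply le_antisymm
  · refine csSup_le ⟨_, ∅, fun u hu => absurd hu (Set.notMem_empty u), rfl⟩ hub
  · obtain ⟨f, D, hfdom, hDdisp, hfD⟩ :=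
      exists_dominating_dispersed G a b hab hadj (∑ v, w v) w rfl
    have hm₀mem : sInf {n | ∃ g : V → ℕ, WDominates G w g ↑D ∧ ∑ v, g v = n} ∈
        {n | ∃ g : V → ℕ, WDominates G w g ↑D ∧ ∑ v, g v = n} :=
      Nat.sInf_mem ⟨_, w, fun u _ => hwdom u (Set.mem_univ u), rfl⟩
    obtain ⟨g, hgdom, hgsum⟩ := hm₀mem
    have hdisjoint : (↑D : Set V).PairwiseDisjoint (closedNbr G) := by
      intro p hp q hq hpq
      have hD := hDdisp p hp q hq hpq
      simp only [Function.onFun]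
      rw [Finset.disjoint_left]
      intro y hyp hyq
      rcases Finset.mem_insert.mp hyp with rfl | hyp'
      · rcases Finset.mem_insert.mp hyq with h | hyq'
        · exact hpq h
        · exact hD.1 ((SimpleGraph.mem_neighborFinset _ _ _).mp hyq').symm
      · have hadjpy : G.Adj p y := (SimpleGraph.mem_neighborFinset _ _ _).mp hyp'
        rcases Finset.mem_insert.mp hyq with rfl | hyq'
        · exact hD.1 hadjpy
        · exact hD.2 y ⟨hadjpy, ((SimpleGraph.mem_neighborFinset _ _ _).mp hyq').symm⟩
    have hsum : ∑ d ∈ D, w d ≤ ∑ v, g v := by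
      calc ∑ d ∈ D, w d ≤ ∑ d ∈ D, ∑ y ∈ closedNbr G d, g y :=
            Finset.sum_le_sum (fun d hd => hgdom d (Finset.mem_coe.mpr hd))
        _ = ∑ y ∈ D.biUnion (closedNbr G), g y := (Finset.sum_biUnion hdisjoint).symm
        _ ≤ ∑ y, g y := Finset.sum_le_sum_of_subset (Finset.subset_univ _)
    have h1 : gammaW G w ≤ ∑ v, f v := Nat.sInf_le ⟨f, hfdom, rfl⟩
    have hmemI : sInf {n | ∃ g : V → ℕ, WDominates G w g ↑D ∧ ∑ v, g v = n} ∈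
        {m | ∃ I : Set V,
          (∀ u ∈ I, ∀ v ∈ I, u ≠ v → ¬ G.Adj u v) ∧
          m = sInf {n | ∃ f : V → ℕ, WDominates G w f I ∧ ∑ v, f v = n}} :=
      ⟨(↑D : Set V), fun p hp q hq hpq => (hDdisp p hp q hq hpq).1, rfl⟩
    have h2 : sInf {n | ∃ g : V → ℕ, WDominates G w g ↑D ∧ ∑ v, g v = n} ≤ gammaIW G w :=
      le_csSup hBdd hmemI
    exact h1.trans (hfD.trans (hsum.trans (hgsum.le.trans h2)))
end

section
/- Let T be a finite tree (a finite connected acyclic simple graph) and let G be the line graph of T, i.e., the simple graph whose vertices are the edges of T, with two distinct edges adjacent in G if and only if they share an endpoint in T. Then for every weight function w : V(G) → ℕ, γ_w(G) = ρ_w(G). -/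
open Finset

variable {V : Type*}

set_option linter.unusedSectionVars false

section Generic
variable [Fintype V] [DecidableEq V] (G : SimpleGraph V) [DecidableRel G.Adj]

lemma mem_closedNbr {u x : V} : x ∈ closedNbr G u ↔ x = u ∨ G.Adj u x := by
  simp [closedNbr]

lemma mem_closedNbr_comm {u x : V} : x ∈ closedNbr G u ↔ u ∈ closedNbr G x := by
  simp only [mem_closedNbr]
  constructor
  · rintro (rfl | h)
    · exact Or.inl rfl
    · exact Or.inr h.symm
  · rintro (rfl | h)
    · exact Or.inl rfl
    · exact Or.inr h.symm

lemma gamma_spec (w : V → ℕ) :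
    ∃ f : V → ℕ, WDominates G w f Set.univ ∧ ∑ v, f v = gammaW G w := by
  have hne : {n | ∃ f : V → ℕ, WDominates G w f Set.univ ∧ ∑ v, f v = n}.Nonempty := by
    refine ⟨∑ v, w v, w, fun u _ => ?_, rfl⟩
    exact Finset.single_le_sum (fun i _ => Nat.zero_le _) (Finset.mem_insert_self u _)
  exact Nat.sInf_mem hne

lemma gammaW_le {w f : V → ℕ} (hf : WDominates G w f Set.univ) : gammaW G w ≤ ∑ v, f v :=
  Nat.sInf_le ⟨f, hf, rfl⟩

lemma rho_bdd (w : V → ℕ) :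
    BddAbove {m | ∃ D : Finset V, Dispersed G ↑D ∧ ∑ v ∈ D, w v = m} := by
  refine ⟨∑ v, w v, ?_⟩
  rintro m ⟨D, _, rfl⟩
  exact Finset.sum_le_sum_of_subset (Finset.subset_univ D)

lemma rho_spec (w : V → ℕ) :
    ∃ D : Finset V, Dispersed G ↑D ∧ ∑ v ∈ D, w v = rhoW G w := by
  have hne : {m | ∃ D : Finset V, Dispersed G ↑D ∧ ∑ v ∈ D, w v = m}.Nonempty :=
    ⟨0, ∅, by simp [Dispersed], by simp⟩
  exact Nat.sSup_mem hne (rho_bdd G w)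

lemma le_rhoW {w : V → ℕ} {D : Finset V} (hD : Dispersed G ↑D) :
    ∑ v ∈ D, w v ≤ rhoW G w :=
  le_csSup (rho_bdd G w) ⟨D, hD, rfl⟩

lemma rho_le_gamma (w : V → ℕ) : rhoW G w ≤ gammaW G w := by
  obtain ⟨f, hf, hfs⟩ := gamma_spec G w
  obtain ⟨D, hD, hDs⟩ := rho_spec G w
  rw [← hDs, ← hfs]
  have hdisj : (↑D : Set V).PairwiseDisjoint (closedNbr G) := by
    intro u hu v hv huv
    obtain ⟨hnadj, hno⟩ := hD u hu v hv huv
    refine Finset.disjoint_left.2 fun x hxu hxv => ?_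
    rcases (mem_closedNbr G).1 hxu with rfl | hadju
    · rcases (mem_closedNbr G).1 hxv with rfl | hadjv
      · exact huv rfl
      · exact hnadj hadjv.symm
    · rcases (mem_closedNbr G).1 hxv with rfl | hadjv
      · exact hnadj hadju
      · exact hno x ⟨hadju, hadjv.symm⟩
  calc ∑ v ∈ D, w v ≤ ∑ v ∈ D, ∑ x ∈ closedNbr G v, f x :=
        Finset.sum_le_sum fun v _ => hf v (Set.mem_univ v)
    _ = ∑ x ∈ D.biUnion (closedNbr G), f x := (Finset.sum_biUnion hdisj).symm
    _ ≤ ∑ v, f v := Finset.sum_le_sum_of_subset (Finset.subset_univ _)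

lemma gamma_le_rho_of_key
    (hkey : ∀ w : V → ℕ, (∃ v, w v ≠ 0) → ∃ s c : V, s ∈ closedNbr G c ∧ w s ≠ 0 ∧
      ∀ d, w d ≠ 0 → (d = s ∨ G.Adj d s ∨ ∃ x, G.Adj d x ∧ G.Adj x s) → d ∈ closedNbr G c) :
    ∀ w : V → ℕ, gammaW G w ≤ rhoW G w := by
  suffices H : ∀ n (w : V → ℕ), ∑ v, w v = n → gammaW G w ≤ rhoW G w from fun w => H _ w rfl
  intro n
  induction n using Nat.strong_induction_on with
  | _ n IH =>
  intro w hn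
  by_cases hz : ∀ v, w v = 0
  · have h0 : gammaW G w ≤ 0 := by
      have := gammaW_le G (w := w) (f := fun _ => 0) (fun u _ => by simp [hz u])
      simpa using this
    exact le_trans h0 (Nat.zero_le _)
  · push_neg at hz
    obtain ⟨s, c, hsc, hs, hk⟩ := hkey w hz
    set w' : V → ℕ := fun v => if v ∈ closedNbr G c then w v - w s else w v with hw'
    have hle : ∀ v, w' v ≤ w v := by
      intro v; by_cases h : v ∈ closedNbr G c <;> simp [hw', h, Nat.sub_le]
    have hw's : w' s = 0 := by simp [hw', hsc]
    have hlt : ∑ v, w' v < n := by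
      rw [← hn]
      refine Finset.sum_lt_sum (fun v _ => hle v) ⟨s, Finset.mem_univ s, ?_⟩
      rw [hw's]; exact Nat.pos_of_ne_zero hs
    have IH' : gammaW G w' ≤ rhoW G w' := IH _ hlt w' rfl
    -- Step 1 : gammaW w ≤ gammaW w' + w s
    have step1 : gammaW G w ≤ gammaW G w' + w s := by
      obtain ⟨f', hf', hsum'⟩ := gamma_spec G w'
      set f : V → ℕ := fun v => f' v + if v = c then w s else 0 with hf
      have hsumf : ∑ v, f v = gammaW G w' + w s := by
        rw [hf]
        rw [Finset.sum_add_distrib, hsum', Finset.sum_ite_eq' Finset.univ c fun _ => w s]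
        simp
      have hdom : WDominates G w f Set.univ := by
        intro u _
        have hsplit : ∑ x ∈ closedNbr G u, f x
            = (∑ x ∈ closedNbr G u, f' x) + if c ∈ closedNbr G u then w s else 0 := by
          rw [hf, Finset.sum_add_distrib, Finset.sum_ite_eq' (closedNbr G u) c fun _ => w s]
        by_cases hu : u ∈ closedNbr G c
        · have hcu : c ∈ closedNbr G u := (mem_closedNbr_comm G).1 hu
          rw [hsplit, if_pos hcu]
          have h1 : w u ≤ (w u - w s) + w s := le_tsub_add
          have h2 : w' u = w u - w s := by simp [hw', hu]
          exact le_trans h1 (Nat.add_le_add_right (h2 ▸ hf' u (Set.mem_univ u)) _)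
        · have h2 : w' u = w u := by simp [hw', hu]
          calc w u = w' u := h2.symm
            _ ≤ ∑ x ∈ closedNbr G u, f' x := hf' u (Set.mem_univ u)
            _ ≤ _ := by rw [hsplit]; exact Nat.le_add_right _ _
      calc gammaW G w ≤ ∑ v, f v := gammaW_le G hdom
        _ = gammaW G w' + w s := hsumf
    -- Step 2 : rhoW w' + w s ≤ rhoW w
    have step2 : rhoW G w' + w s ≤ rhoW G w := by
      obtain ⟨D', hD', hsumD⟩ := rho_spec G w'
      set D'' : Finset V := D'.filter (fun v => w' v ≠ 0) with hD''def
      have hsub : D'' ⊆ D' := Finset.filter_subset _ _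
      have hD'' : Dispersed G ↑D'' := fun u hu v hv huv =>
        hD' u (hsub hu) v (hsub hv) huv
      have hsum'' : ∑ v ∈ D'', w' v = rhoW G w' := by
        rw [hD''def, Finset.sum_filter_ne_zero, hsumD]
      have hpos : ∀ d ∈ D'', w' d ≠ 0 := fun d hd => (Finset.mem_filter.1 hd).2
      by_cases hex : ∃ d ∈ D'', d ∈ closedNbr G c
      · obtain ⟨d₀, hd₀D, hd₀c⟩ := hex
        have hws : w s ≤ w d₀ := by
          have := hpos d₀ hd₀D
          rw [hw'] at this
          simp only [hd₀c, if_pos] at this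
          omega
        have hd₀ : w' d₀ + w s = w d₀ := by
          simp [hw', hd₀c, Nat.sub_add_cancel hws]
        have hkey2 : ∑ v ∈ D'', w' v + w s ≤ ∑ v ∈ D'', w v := by
          rw [← Finset.sum_erase_add D'' w' hd₀D, ← Finset.sum_erase_add D'' w hd₀D]
          rw [add_assoc, hd₀]
          exact Nat.add_le_add (Finset.sum_le_sum fun v _ => hle v) le_rfl
        calc rhoW G w' + w s = ∑ v ∈ D'', w' v + w s := by rw [hsum'']
          _ ≤ ∑ v ∈ D'', w v := hkey2
          _ ≤ rhoW G w := le_rhoW G hD''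
      · have hsD : s ∉ D'' := fun h => hex ⟨s, h, hsc⟩
        have hfar : ∀ v ∈ D'', ¬ G.Adj v s ∧ ∀ x, ¬(G.Adj v x ∧ G.Adj x s) := by
          intro v hv
          have hvC : v ∉ closedNbr G c := fun h => hex ⟨v, hv, h⟩
          have hwv : w v ≠ 0 := fun h => hpos v hv (Nat.le_zero.1 (h ▸ hle v))
          constructor
          · intro hadj
            exact hvC (hk v hwv (Or.inr (Or.inl hadj)))
          · intro x hx
            exact hvC (hk v hwv (Or.inr (Or.inr ⟨x, hx⟩)))
        have hdisp : Dispersed G ↑(insert s D'') := by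
          intro u hu v hv huv
          simp only [Finset.coe_insert, Set.mem_insert_iff, Finset.mem_coe] at hu hv
          rcases hu with rfl | hu
          · rcases hv with rfl | hv
            · exact absurd rfl huv
            · obtain ⟨h1, h2⟩ := hfar v hv
              exact ⟨fun h => h1 h.symm, fun x hx => h2 x ⟨hx.2.symm, hx.1.symm⟩⟩
          · rcases hv with rfl | hv
            · exact hfar u hu
            · exact hD'' u hu v hv huv
        have : w s + ∑ v ∈ D'', w v ≤ rhoW G w := by
          rw [← Finset.sum_insert hsD]
          exact le_rhoW G hdisp
        calc rhoW G w' + w s = w s + ∑ v ∈ D'', w' v := by rw [hsum'']; ring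
          _ ≤ w s + ∑ v ∈ D'', w v := Nat.add_le_add_left (Finset.sum_le_sum fun v _ => hle v) _
          _ ≤ rhoW G w := this
    calc gammaW G w ≤ gammaW G w' + w s := step1
      _ ≤ rhoW G w' + w s := Nat.add_le_add_right IH' _
      _ ≤ rhoW G w := step2

end Generic

section Tree
variable {W : Type*} [DecidableEq W] {T : SimpleGraph W}

lemma dist_le_of_mem_support' {u v x : W} {p : T.Walk u v} (hx : x ∈ p.support) :
    T.dist u x ≤ p.length :=
  le_trans (SimpleGraph.dist_le (p.takeUntil x hx)) (SimpleGraph.Walk.length_takeUntil_le p hx)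

lemma adj_dist_le_one {x y : W} (h : T.Adj x y) : T.dist x y ≤ 1 :=
  SimpleGraph.dist_le (SimpleGraph.Walk.cons h SimpleGraph.Walk.nil)

lemma unique_down (hT : T.IsTree) (r : W) {v z₁ z₂ : W} (h₁ : T.Adj z₁ v) (h₂ : T.Adj z₂ v)
    (hd₁ : T.dist r z₁ + 1 = T.dist r v) (hd₂ : T.dist r z₂ + 1 = T.dist r v) : z₁ = z₂ := by
  obtain ⟨p₁, hp₁, hl₁⟩ := hT.isConnected.exists_path_of_dist r z₁
  obtain ⟨p₂, hp₂, hl₂⟩ := hT.isConnected.exists_path_of_dist r z₂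
  have hv₁ : v ∉ p₁.support := fun hmem => by
    have := dist_le_of_mem_support' hmem; omega
  have hv₂ : v ∉ p₂.support := fun hmem => by
    have := dist_le_of_mem_support' hmem; omega
  set q₁ : T.Walk v r := SimpleGraph.Walk.cons h₁.symm p₁.reverse with hq₁
  set q₂ : T.Walk v r := SimpleGraph.Walk.cons h₂.symm p₂.reverse with hq₂
  have hq₁p : q₁.IsPath := by
    rw [hq₁, SimpleGraph.Walk.cons_isPath_iff]
    refine ⟨hp₁.reverse, ?_⟩
    rw [SimpleGraph.Walk.support_reverse, List.mem_reverse]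
    exact hv₁
  have hq₂p : q₂.IsPath := by
    rw [hq₂, SimpleGraph.Walk.cons_isPath_iff]
    refine ⟨hp₂.reverse, ?_⟩
    rw [SimpleGraph.Walk.support_reverse, List.mem_reverse]
    exact hv₂
  have heq : q₁ = q₂ := ((hT.existsUnique_path v r).unique hq₁p hq₂p)
  have h1 : q₁.getVert 1 = z₁ := by
    rw [hq₁, SimpleGraph.Walk.getVert_cons_succ, SimpleGraph.Walk.getVert_zero]
  have h2 : q₂.getVert 1 = z₂ := by
    rw [hq₂, SimpleGraph.Walk.getVert_cons_succ, SimpleGraph.Walk.getVert_zero]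
  rw [← h1, ← h2, heq]

lemma adj_dist (hT : T.IsTree) (r : W) {x y : W} (h : T.Adj x y) :
    T.dist r y = T.dist r x + 1 ∨ T.dist r x = T.dist r y + 1 := by
  have htri1 : T.dist r y ≤ T.dist r x + 1 :=
    le_trans (hT.isConnected.dist_triangle) (Nat.add_le_add_left (adj_dist_le_one h) _)
  have htri2 : T.dist r x ≤ T.dist r y + 1 :=
    le_trans (hT.isConnected.dist_triangle) (Nat.add_le_add_left (adj_dist_le_one h.symm) _)
  have hne : T.dist r x ≠ T.dist r y := by
    intro heq
    obtain ⟨p, hp, hl⟩ := hT.isConnected.exists_path_of_dist r x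
    by_cases hy : y ∈ p.support
    · -- then dist r y < dist r x, contradiction with heq
      have hsplit := p.take_spec hy
      have hlen : (p.takeUntil y hy).length + (p.dropUntil y hy).length = p.length := by
        conv_rhs => rw [← hsplit]
        rw [SimpleGraph.Walk.length_append]
      have hd1 : T.dist r y ≤ (p.takeUntil y hy).length := SimpleGraph.dist_le _
      have hd2 : (p.dropUntil y hy).length ≠ 0 := fun h0 =>
        h.ne' (SimpleGraph.Walk.eq_of_length_eq_zero h0)
      omega
    · have hcons : (SimpleGraph.Walk.cons h.symm p.reverse).IsPath := by
        rw [SimpleGraph.Walk.cons_isPath_iff]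
        refine ⟨hp.reverse, ?_⟩
        rw [SimpleGraph.Walk.support_reverse, List.mem_reverse]
        exact hy
      obtain ⟨q, hq, hlq⟩ := hT.isConnected.exists_path_of_dist y r
      have heq2 : SimpleGraph.Walk.cons h.symm p.reverse = q :=
        (hT.existsUnique_path y r).unique hcons hq
      have : (SimpleGraph.Walk.cons h.symm p.reverse).length = q.length := by rw [heq2]
      rw [SimpleGraph.Walk.length_cons, SimpleGraph.Walk.length_reverse] at this
      rw [SimpleGraph.dist_comm] at hlq
      omega
  omega

lemma parent_exists (hT : T.IsTree) (r : W) {v : W} {n : ℕ} (hv : T.dist r v = n + 1) :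
    ∃ t : W, T.Adj t v ∧ T.dist r t = n := by
  have hvr : v ≠ r := by
    rintro rfl
    rw [SimpleGraph.dist_comm, SimpleGraph.dist_self] at hv
    omega
  obtain ⟨p, hp, hl⟩ := hT.isConnected.exists_path_of_dist r v
  obtain ⟨t, hadj, q, hq⟩ := SimpleGraph.Walk.exists_eq_cons_of_ne hvr p.reverse
  have hql : q.length = n := by
    have : p.reverse.length = p.length := SimpleGraph.Walk.length_reverse p
    rw [hq, SimpleGraph.Walk.length_cons] at this
    omega
  have h1 : T.dist r t ≤ n := by
    have := SimpleGraph.dist_le q.reverse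
    rwa [SimpleGraph.Walk.length_reverse, hql] at this
  have h2 : n ≤ T.dist r t := by
    have htri : T.dist r v ≤ T.dist r t + T.dist t v := hT.isConnected.dist_triangle
    have := adj_dist_le_one hadj.symm
    omega
  exact ⟨t, hadj.symm, le_antisymm h1 h2⟩

lemma core_tree (hT : T.IsTree) (r a b t : W) (hab : T.Adj a b)
    (hb : T.dist r b = T.dist r a + 1)
    (hpar : ∀ p, T.Adj p a → T.dist r p < T.dist r a → p = t) :
    ∀ p p' q : W, T.Adj p p' → (T.dist r p ≤ T.dist r a ∨ T.dist r p' ≤ T.dist r a) →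
      (q = a ∨ q = b) → (p = q ∨ T.Adj p q) →
      p = a ∨ p = t ∨ p' = a ∨ p' = t := by
  intro p p' q hpp' hmin hq hpq
  rcases hq with hq | hq <;> rw [hq] at hpq
  clear hq
  · -- q = a
    rcases hpq with rfl | hpa
    · exact Or.inl rfl
    · rcases adj_dist hT r hpa with h1 | h2
      · -- dist r a = dist r p + 1
        exact Or.inr (Or.inl (hpar p hpa (by omega)))
      · -- dist r p = dist r a + 1
        have hp'le : T.dist r p' ≤ T.dist r a := by
          rcases hmin with h | h
          · omega
          · exact h
        rcases adj_dist hT r hpp' with h3 | h4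
        · omega
        · -- p' and a are both "down" neighbors of p
          have hp'd : T.dist r p' + 1 = T.dist r p := by omega
          have had : T.dist r a + 1 = T.dist r p := by omega
          exact Or.inr (Or.inr (Or.inl
            (unique_down hT r (hpp'.symm) (hpa.symm) hp'd had)))
  · -- q = b
    rcases hpq with rfl | hpb
    · -- p = b
      have hp'le : T.dist r p' ≤ T.dist r a := by
        rcases hmin with h | h
        · omega
        · exact h
      rcases adj_dist hT r hpp' with h3 | h4
      · omega
      · have hp'd : T.dist r p' + 1 = T.dist r p := by omega
        have had : T.dist r a + 1 = T.dist r p := by omega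
        exact Or.inr (Or.inr (Or.inl (unique_down hT r (hpp'.symm) hab hp'd had)))
    · rcases adj_dist hT r hpb with h1 | h2
      · -- dist r b = dist r p + 1, so dist r p = dist r a
        have hpd : T.dist r p + 1 = T.dist r b := by omega
        have had : T.dist r a + 1 = T.dist r b := by omega
        exact Or.inl (unique_down hT r hpb hab hpd had)
      · -- dist r p = dist r b + 1 = dist r a + 2 : contradiction
        have : T.dist r p' ≤ T.dist r a := by
          rcases hmin with h | h
          · omega
          · exact h
        rcases adj_dist hT r hpp' with h3 | h4 <;> omega

end Tree

section EdgeHelpers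
variable {W : Type*} {T : SimpleGraph W}

lemma edge_decomp (e : T.edgeSet) : ∃ a b : W, T.Adj a b ∧ (e : Sym2 W) = s(a, b) := by
  obtain ⟨e, he⟩ := e
  induction e with
  | _ x y => exact ⟨x, y, (T.mem_edgeSet).1 he, rfl⟩

lemma edge_mem_mem (e : T.edgeSet) {x y : W} (hx : x ∈ (e : Sym2 W)) (hy : y ∈ (e : Sym2 W)) :
    x = y ∨ T.Adj x y := by
  obtain ⟨a, b, hab, he⟩ := edge_decomp e
  rw [he, Sym2.mem_iff] at hx hy
  rcases hx with rfl | rfl <;> rcases hy with rfl | rfl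
  · exact Or.inl rfl
  · exact Or.inr hab
  · exact Or.inr hab.symm
  · exact Or.inl rfl

lemma edge_other (e : T.edgeSet) {p : W} (hp : p ∈ (e : Sym2 W)) :
    ∃ p' : W, (e : Sym2 W) = s(p, p') ∧ T.Adj p p' := by
  obtain ⟨p', hp'⟩ := Sym2.mem_iff_exists.1 hp
  refine ⟨p', hp', ?_⟩
  have := e.2
  rw [hp'] at this
  exact (T.mem_edgeSet).1 this

end EdgeHelpers

lemma tree_key {W : Type*} [Fintype W] [DecidableEq W]
    (T : SimpleGraph W) [DecidableRel T.Adj] (hT : T.IsTree)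
    [Fintype T.edgeSet]
    (G : SimpleGraph T.edgeSet) [DecidableRel G.Adj]
    (hG : ∀ e f : T.edgeSet, G.Adj e f ↔
      e ≠ f ∧ ∃ x : W, x ∈ (e : Sym2 W) ∧ x ∈ (f : Sym2 W))
    (w : T.edgeSet → ℕ) (hw : ∃ v, w v ≠ 0) :
    ∃ s c : T.edgeSet, s ∈ closedNbr G c ∧ w s ≠ 0 ∧
      ∀ d, w d ≠ 0 → (d = s ∨ G.Adj d s ∨ ∃ x, G.Adj d x ∧ G.Adj x s) →
        d ∈ closedNbr G c := by
  classical
  obtain ⟨r⟩ : Nonempty W := hT.isConnected.nonempty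
  set ed : T.edgeSet → ℕ := fun e =>
    Sym2.lift ⟨fun x y => min (T.dist r x) (T.dist r y), fun x y => min_comm _ _⟩
      (e : Sym2 W) with hed
  obtain ⟨v0, hv0⟩ := hw
  have hSne : (Finset.univ.filter fun e : T.edgeSet => w e ≠ 0).Nonempty :=
    ⟨v0, Finset.mem_filter.2 ⟨Finset.mem_univ _, hv0⟩⟩
  obtain ⟨s, hsmem, hsmax⟩ := Finset.exists_max_image _ ed hSne
  have hws : w s ≠ 0 := (Finset.mem_filter.1 hsmem).2
  obtain ⟨x, y, hxy, hes⟩ := edge_decomp s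
  obtain ⟨a, b, hab, hesab, hb⟩ : ∃ a b : W, T.Adj a b ∧ (s : Sym2 W) = s(a, b) ∧
      T.dist r b = T.dist r a + 1 := by
    rcases adj_dist hT r hxy with h | h
    · exact ⟨x, y, hxy, hes, h⟩
    · exact ⟨y, x, hxy.symm, by rw [hes, Sym2.eq_swap], h⟩
  have heds : ed s = T.dist r a := by
    simp only [hed]
    rw [hesab, Sym2.lift_mk]
    simp only []
    omega
  obtain ⟨t, hta, hpar⟩ : ∃ t : W, T.Adj t a ∧
      ∀ p, T.Adj p a → T.dist r p < T.dist r a → p = t := by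
    rcases Nat.eq_zero_or_pos (T.dist r a) with h0 | hpos
    · exact ⟨b, hab.symm, fun p _ hlt => absurd hlt (by omega)⟩
    · obtain ⟨n, hn⟩ : ∃ n, T.dist r a = n + 1 := ⟨T.dist r a - 1, by omega⟩
      obtain ⟨t, hta, htd⟩ := parent_exists hT r hn
      refine ⟨t, hta, fun p hpa hlt => ?_⟩
      rcases adj_dist hT r hpa with h | h
      · exact unique_down hT r hpa hta (by omega) (by omega)
      · omega
  set c : T.edgeSet := ⟨s(t, a), (T.mem_edgeSet).2 hta⟩ with hc
  have hac : a ∈ (c : Sym2 W) := by rw [hc]; simp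
  have htc : t ∈ (c : Sym2 W) := by rw [hc]; simp
  have has : a ∈ (s : Sym2 W) := by rw [hesab]; simp
  have hmemNc : ∀ d : T.edgeSet, (∃ z : W, z ∈ (d : Sym2 W) ∧ z ∈ (c : Sym2 W)) →
      d ∈ closedNbr G c := by
    rintro d ⟨z, hzd, hzc⟩
    by_cases hdc : d = c
    · exact (mem_closedNbr G).2 (Or.inl hdc)
    · exact (mem_closedNbr G).2 (Or.inr ((hG c d).2 ⟨fun h => hdc h.symm, z, hzc, hzd⟩))
  have hsNc : s ∈ closedNbr G c := hmemNc s ⟨a, has, hac⟩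
  refine ⟨s, c, hsNc, hws, ?_⟩
  intro d hd hnear
  have hwit : d = s ∨ ∃ p q : W, p ∈ (d : Sym2 W) ∧ q ∈ (s : Sym2 W) ∧
      (p = q ∨ T.Adj p q) := by
    rcases hnear with rfl | hadj | ⟨x', hdx, hxs⟩
    · exact Or.inl rfl
    · obtain ⟨_, z, hz1, hz2⟩ := (hG d s).1 hadj
      exact Or.inr ⟨z, z, hz1, hz2, Or.inl rfl⟩
    · obtain ⟨_, p, hpd, hpx⟩ := (hG d x').1 hdx
      obtain ⟨_, q, hqx, hqs⟩ := (hG x' s).1 hxs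
      exact Or.inr ⟨p, q, hpd, hqs, edge_mem_mem x' hpx hqx⟩
  rcases hwit with rfl | ⟨p, q, hpd, hqs, hpq⟩
  · exact hsNc
  obtain ⟨p', hdp', hpp'⟩ := edge_other d hpd
  have hmin : T.dist r p ≤ T.dist r a ∨ T.dist r p' ≤ T.dist r a := by
    have hedle : ed d ≤ ed s := hsmax d (Finset.mem_filter.2 ⟨Finset.mem_univ _, hd⟩)
    rw [heds] at hedle
    have hedd : ed d = min (T.dist r p) (T.dist r p') := by
      simp only [hed]
      rw [hdp', Sym2.lift_mk]
    rw [hedd] at hedle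
    exact min_le_iff.1 hedle
  have hq' : q = a ∨ q = b := by rw [hesab, Sym2.mem_iff] at hqs; exact hqs
  have hp'd : p' ∈ (d : Sym2 W) := by rw [hdp']; simp
  rcases core_tree hT r a b t hab hb hpar p p' q hpp' hmin hq' hpq with h | h | h | h
  · exact hmemNc d ⟨p, hpd, by rw [h]; exact hac⟩
  · exact hmemNc d ⟨p, hpd, by rw [h]; exact htc⟩
  · exact hmemNc d ⟨p', hp'd, by rw [h]; exact hac⟩
  · exact hmemNc d ⟨p', hp'd, by rw [h]; exact htc⟩

/-- For the line graph `G` of a finite tree `T`, `γ_w(G) = ρ_w(G)`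
for every weight function `w`. -/
theorem lineGraph_tree_gamma_eq_rho {W : Type*} [Fintype W] [DecidableEq W]
    (T : SimpleGraph W) [DecidableRel T.Adj] (hT : T.IsTree)
    [Fintype T.edgeSet]
    (G : SimpleGraph T.edgeSet) [DecidableRel G.Adj]
    (hG : ∀ e f : T.edgeSet, G.Adj e f ↔
      e ≠ f ∧ ∃ x : W, x ∈ (e : Sym2 W) ∧ x ∈ (f : Sym2 W))
    (w : T.edgeSet → ℕ) :
    gammaW G w = rhoW G w := by
  classical
  refine le_antisymm ?_ (rho_le_gamma G w)
  exact gamma_le_rho_of_key G (fun w' hw' => tree_key T hT G hG w' hw') w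
end
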